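/- Let n, s, t be integers with s > t ≥ 1 and n ≥ 2s+t+1, and let F ⊆ C([n],3) be a shifted family with property U(s, 2s+t). If for some i ∈ {1,…,t+1} the set B_i := {i, 2t+3−i, 2s+t+2−i} is not in F, then ν(F \ A(2s+t, 3, n, 3)) ≤ t; that is, any collection of pairwise disjoint members of F that are not contained in [2s+t] has size at most t. -/

import Mathlib

open Finset
open scoped Classical

/-- `F` has property `U(s,q)`: any `s` (not necessarily distinct) members have union of size `≤ q`. -/
def propU (F : Finset (Finset ℕ)) (s q : ℕ) : Prop :=
  ∀ G : Fin s → Finset ℕ, (∀ i, G i ∈ F) → (Finset.univ.sup G).card ≤ q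

/-- `A(p,r,n,k)`: the `k`-subsets of `[n] = {1,…,n}` meeting `[p]` in at least `r` elements. -/
def famA (p r n k : ℕ) : Finset (Finset ℕ) :=
  (Finset.powersetCard k (Finset.Icc 1 n)).filter fun A => r ≤ (A ∩ Finset.Icc 1 p).card

/-- `G ≼ F`: comparing the increasing enumerations elementwise. -/
def shiftLE (G F : Finset ℕ) : Prop :=
  List.Forall₂ (· ≤ ·) (G.sort (· ≤ ·)) (F.sort (· ≤ ·))

/-- `F ⊆ C([n],k)` is shifted. -/
def IsShifted (n k : ℕ) (F : Finset (Finset ℕ)) : Prop :=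
  ∀ A ∈ F, ∀ G ∈ Finset.powersetCard k (Finset.Icc 1 n), shiftLE G A → G ∈ F

/-- `m(n,k,s,q)`: the maximum size of a family `F ⊆ C([n],k)` with property `U(s,q)`. -/
noncomputable def mMax (n k s q : ℕ) : ℕ :=
  ((Finset.powersetCard k (Finset.Icc 1 n)).powerset.filter fun F => propU F s q).sup
    Finset.card

/-!
A member `A = {a < b < c}` of `S` has `c > 2s+t`. If `i ≤ a` and `2t+3-i ≤ b`, then `Bᵢ ≼ A`,
so `Bᵢ ∈ F` by shiftedness. Hence every `A ∈ S` meets `[1, i)` or has two elements in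
`[i, 2t+3-i)`, i.e. `2 ≤ 2|A ∩ [1, i)| + |A ∩ [i, 2t+3-i)|`. Summing over the pairwise disjoint
members of `S` gives `2|S| ≤ 2(i-1) + (2t+3-2i) = 2t+1`.
-/

theorem sort_triple {α : Type*} [LinearOrder α] {a b c : α} (hab : a < b) (hbc : b < c) :
    ({a, b, c} : Finset α).sort (· ≤ ·) = [a, b, c] := by
  simpa using (List.toFinset_sort (· ≤ ·) (l := [a, b, c])
    (by simp [hab.ne, hbc.ne, (hab.trans hbc).ne])).mpr
    (by simp [hab.le, hbc.le, (hab.trans hbc).le])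

theorem exists_eq_triple_of_card_eq_three {α : Type*} [LinearOrder α] {A : Finset α}
    (hA : A.card = 3) : ∃ a b c, a < b ∧ b < c ∧ A = {a, b, c} := by
  obtain ⟨a, b, c, hl⟩ := List.length_eq_three.mp ((A.length_sort (· ≤ ·)).trans hA)
  have hlt := (A.sortedLT_sort).pairwise
  rw [hl] at hlt
  simp only [List.pairwise_cons, List.mem_cons, List.not_mem_nil] at hlt
  refine ⟨a, b, c, hlt.1 b (by simp), hlt.2.1 c (by simp), ?_⟩
  rw [← A.sort_toFinset (· ≤ ·), hl]
  simp

theorem shiftLE_triple {a b c a' b' c' : ℕ} (hab : a < b) (hbc : b < c) (hab' : a' < b')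
    (hbc' : b' < c') (ha : a ≤ a') (hb : b ≤ b') (hc : c ≤ c') :
    shiftLE {a, b, c} {a', b', c'} := by
  rw [shiftLE, sort_triple hab hbc, sort_triple hab' hbc']
  exact .cons ha (.cons hb (.cons hc .nil))

theorem IsShifted.triple_mem {n : ℕ} {F : Finset (Finset ℕ)} (hF : IsShifted n 3 F)
    {a b c a' b' c' : ℕ} (hmem : {a', b', c'} ∈ F) (hn : c' ≤ n) (ha₁ : 1 ≤ a)
    (hab : a < b) (hbc : b < c) (hab' : a' < b') (hbc' : b' < c')
    (ha : a ≤ a') (hb : b ≤ b') (hc : c ≤ c') : {a, b, c} ∈ F := by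
  refine hF _ hmem _ ?_ (shiftLE_triple hab hbc hab' hbc' ha hb hc)
  rw [mem_powersetCard, card_eq_three]
  refine ⟨?_, a, b, c, by omega, by omega, by omega, rfl⟩
  intro x hx
  simp only [mem_insert, mem_singleton] at hx
  rw [mem_Icc]
  omega

theorem exists_lt_of_notMem_famA {p n k : ℕ} {A : Finset ℕ}
    (hA : A ∈ powersetCard k (Icc 1 n)) (hAp : A ∉ famA p k n k) : ∃ x ∈ A, p < x := by
  by_contra! hle
  refine hAp (mem_filter.mpr ⟨hA, ?_⟩)
  rw [inter_eq_left.mpr fun x hx => mem_Icc.mpr ⟨(mem_Icc.mp ((mem_powersetCard.mp hA).1 hx)).1,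
    hle x hx⟩, (mem_powersetCard.mp hA).2]

theorem sum_card_inter_le_of_pairwiseDisjoint {α : Type*} [DecidableEq α]
    {S : Finset (Finset α)} (hS : (S : Set (Finset α)).PairwiseDisjoint id) (X : Finset α) :
    ∑ A ∈ S, (A ∩ X).card ≤ X.card := by
  rw [← card_biUnion (t := (· ∩ X)) fun A hA B hB hAB =>
    (hS hA hB hAB).mono inter_subset_left inter_subset_left]
  exact card_le_card (biUnion_subset.mpr fun _ _ => inter_subset_right)

theorem two_le_card_inter_Ico {A : Finset ℕ} {m i j a b : ℕ} (ha : a ∈ A) (hb : b ∈ A)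
    (hab : a < b) (hma : m ≤ a) (h : a < i ∨ b < j) :
    2 ≤ 2 * (A ∩ Ico m i).card + (A ∩ Ico i j).card := by
  by_cases hai : a < i
  · have : 0 < (A ∩ Ico m i).card := card_pos.mpr ⟨a, mem_inter.mpr ⟨ha, mem_Ico.mpr ⟨hma, hai⟩⟩⟩
    omega
  · have hbj : b < j := h.resolve_left hai
    have hsub : {a, b} ⊆ A ∩ Ico i j := by
      simp only [insert_subset_iff, singleton_subset_iff, mem_inter, mem_Ico]
      exact ⟨⟨ha, by omega, by omega⟩, hb, by omega, hbj⟩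
    have := card_le_card hsub
    rw [card_pair hab.ne] at this
    omega

theorem lt_or_lt_of_isShifted_of_notMem_famA {n s t i : ℕ} (hts : t < s) (hi₁ : 1 ≤ i)
    (hit : i ≤ t + 1) {F : Finset (Finset ℕ)} (hshift : IsShifted n 3 F)
    (hB : ({i, 2 * t + 3 - i, 2 * s + t + 2 - i} : Finset ℕ) ∉ F)
    {a b c : ℕ} (hab : a < b) (hbc : b < c) (hA : {a, b, c} ∈ F)
    (hAn : {a, b, c} ∈ powersetCard 3 (Icc 1 n)) (hAp : {a, b, c} ∉ famA (2 * s + t) 3 n 3) :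
    a < i ∨ b < 2 * t + 3 - i := by
  obtain ⟨x, hx, hx_gt⟩ := exists_lt_of_notMem_famA hAn hAp
  have hc : 2 * s + t < c := by
    simp only [mem_insert, mem_singleton] at hx
    omega
  have hcn : c ≤ n := (mem_Icc.mp ((mem_powersetCard.mp hAn).1 (by simp))).2
  by_contra! h
  exact hB (hshift.triple_mem hA hcn hi₁ (by omega) (by omega) hab hbc h.1 h.2 (by omega))

theorem stmt16_general (n s t : ℕ) (hts : t < s)
    (F : Finset (Finset ℕ)) (hF : F ⊆ Finset.powersetCard 3 (Finset.Icc 1 n))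
    (hshift : IsShifted n 3 F)
    (hB : ∃ i, 1 ≤ i ∧ i ≤ t + 1 ∧
      ({i, 2 * t + 3 - i, 2 * s + t + 2 - i} : Finset ℕ) ∉ F) :
    ∀ S ⊆ F \ famA (2 * s + t) 3 n 3,
      (S : Set (Finset ℕ)).PairwiseDisjoint id → S.card ≤ t := by
  obtain ⟨i, hi₁, hit, hBi⟩ := hB
  intro S hS hdisj
  have hweight : ∀ A ∈ S, 2 ≤ 2 * (A ∩ Ico 1 i).card + (A ∩ Ico i (2 * t + 3 - i)).card := by
    intro A hA
    obtain ⟨hAF, hAp⟩ := mem_sdiff.mp (hS hA)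
    have hAn := hF hAF
    obtain ⟨a, b, c, hab, hbc, rfl⟩ := exists_eq_triple_of_card_eq_three (mem_powersetCard.mp hAn).2
    have ha₁ : 1 ≤ a := (mem_Icc.mp ((mem_powersetCard.mp hAn).1 (by simp))).1
    exact two_le_card_inter_Ico (by simp) (by simp) hab ha₁
      (lt_or_lt_of_isShifted_of_notMem_famA hts hi₁ hit hshift hBi hab hbc hAF hAn hAp)
  have hsum := sum_le_sum hweight
  rw [sum_const, smul_eq_mul, sum_add_distrib, ← mul_sum] at hsum
  have h₁ := sum_card_inter_le_of_pairwiseDisjoint hdisj (Ico 1 i)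
  have h₂ := sum_card_inter_le_of_pairwiseDisjoint hdisj (Ico i (2 * t + 3 - i))
  rw [Nat.card_Ico] at h₁ h₂
  omega

/-- Proposition 2.14 of the paper. -/
theorem stmt16 (n s t : ℕ) (hts : t < s) (ht : 1 ≤ t) (hn : 2 * s + t + 1 ≤ n)
    (F : Finset (Finset ℕ)) (hF : F ⊆ Finset.powersetCard 3 (Finset.Icc 1 n))
    (hshift : IsShifted n 3 F) (hU : propU F s (2 * s + t))
    (hB : ∃ i, 1 ≤ i ∧ i ≤ t + 1 ∧
      ({i, 2 * t + 3 - i, 2 * s + t + 2 - i} : Finset ℕ) ∉ F) :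
    ∀ S ⊆ F \ famA (2 * s + t) 3 n 3,
      (S : Set (Finset ℕ)).PairwiseDisjoint id → S.card ≤ t :=
  stmt16_general n s t hts F hF hshift hB
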